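/- arXiv:2203.02023 — 4 statements merged into one kernel-verified Lean document; each statement's English description precedes it below -/
import Mathlib

section
/- (Covered call lemma) Let V be a nonnegative random variable, r ≥ 0, and σ satisfy E[(V − σ)⁺] = r. Let I and A be {0,1}-valued random variables with A ≤ I pointwise, and suppose V is independent of I. Then E[A·V − I·r] ≤ E[A·min(σ, V)], with equality if and only if the event {I = 1, A = 0, V > σ} has probability zero. -/
/-!
Write `(V - σ)⁺` for `max (V - σ) 0`. Pointwise `A · min σ V = A · V - A · (V - σ)⁺`, and since `I`
is independent of `V`, `E[I · (V - σ)⁺] = E[I] · E[(V - σ)⁺] = E[I · r]`. Hence the right-hand side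
minus the left-hand side is `E[(I - A) · (V - σ)⁺]`, the expectation of a nonnegative variable which
is nonzero exactly on `{I = 1, A = 0, V > σ}`.
-/

open MeasureTheory ProbabilityTheory

lemma min_eq_sub_max_sub_zero (σ v : ℝ) : min σ v = v - max (v - σ) 0 := by
  rcases le_total σ v with h | h
  · rw [min_eq_left h, max_eq_left (sub_nonneg.2 h)]; ring
  · rw [min_eq_right h, max_eq_right (sub_nonpos.2 h)]; ring

lemma sub_mul_max_sub_zero_ne_zero_iff {i a σ v : ℝ} (hi : i = 0 ∨ i = 1) (ha : a = 0 ∨ a = 1)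
    (hai : a ≤ i) : (i - a) * max (v - σ) 0 ≠ 0 ↔ i = 1 ∧ a = 0 ∧ σ < v := by
  have hpos : max (v - σ) 0 ≠ 0 ↔ σ < v := by
    rw [ne_eq, max_eq_right_iff, sub_nonpos, not_le]
  rcases hi with rfl | rfl <;> rcases ha with rfl | rfl <;> norm_num at hai <;> simp [hpos]

section

variable {Ω : Type*} [MeasurableSpace Ω] {μ : Measure Ω}

lemma MeasureTheory.Integrable.mul_of_eq_zero_or_eq_one {f g : Ω → ℝ} (hg : Integrable g μ)
    (hf : AEStronglyMeasurable f μ) (hf01 : ∀ ω, f ω = 0 ∨ f ω = 1) :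
    Integrable (fun ω => f ω * g ω) μ :=
  hg.bdd_mul hf (c := 1) <| ae_of_all _ fun ω => by rcases hf01 ω with h | h <;> simp [h]

lemma integral_mul_max_sub_zero_of_indepFun {V I : Ω → ℝ} (σ : ℝ) (hV : AEStronglyMeasurable V μ)
    (hI : AEStronglyMeasurable I μ) (hindep : IndepFun V I μ) :
    ∫ ω, I ω * max (V ω - σ) 0 ∂μ = (∫ ω, I ω ∂μ) * ∫ ω, max (V ω - σ) 0 ∂μ :=
  (hindep.comp ((measurable_id.sub_const σ).max measurable_const) measurable_id).symm
    |>.integral_fun_mul_eq_mul_integral hI ((hV.sub aestronglyMeasurable_const).sup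
      aestronglyMeasurable_const)

variable [IsProbabilityMeasure μ]

lemma integrable_max_sub_const_zero {V : Ω → ℝ} (hV : Integrable V μ) (σ : ℝ) :
    Integrable (fun ω => max (V ω - σ) 0) μ :=
  (hV.sub (integrable_const σ)).pos_part

lemma integral_mul_min_sub_integral_eq {V I A : Ω → ℝ} {σ r : ℝ}
    (hV : Integrable V μ) (hI01 : ∀ ω, I ω = 0 ∨ I ω = 1) (hA01 : ∀ ω, A ω = 0 ∨ A ω = 1)
    (hImeas : Measurable I) (hAmeas : Measurable A) (hindep : IndepFun V I μ)
    (hσ : ∫ ω, max (V ω - σ) 0 ∂μ = r) :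
    ∫ ω, A ω * min σ (V ω) ∂μ - ∫ ω, (A ω * V ω - I ω * r) ∂μ
      = ∫ ω, (I ω - A ω) * max (V ω - σ) 0 ∂μ := by
  have hf := integrable_max_sub_const_zero hV σ
  have hIf := hf.mul_of_eq_zero_or_eq_one hImeas.aestronglyMeasurable hI01
  have hAf := hf.mul_of_eq_zero_or_eq_one hAmeas.aestronglyMeasurable hA01
  have hAV := hV.mul_of_eq_zero_or_eq_one hAmeas.aestronglyMeasurable hA01
  have hIr := (integrable_const (μ := μ) r).mul_of_eq_zero_or_eq_one
    hImeas.aestronglyMeasurable hI01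
  have hIf_eq : ∫ ω, I ω * max (V ω - σ) 0 ∂μ = ∫ ω, I ω * r ∂μ := by
    rw [integral_mul_max_sub_zero_of_indepFun σ hV.aestronglyMeasurable
      hImeas.aestronglyMeasurable hindep, hσ, integral_mul_const]
  simp_rw [min_eq_sub_max_sub_zero σ, mul_sub, sub_mul]
  rw [integral_sub hAV hAf, integral_sub hAV hIr, integral_sub hIf hAf, hIf_eq]
  ring

end

theorem covered_call_lemma_general
    {Ω : Type*} [MeasurableSpace Ω] (μ : Measure Ω) [IsProbabilityMeasure μ]
    (V I A : Ω → ℝ) (σ r : ℝ)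
    (hV : Integrable V μ)
    (hI01 : ∀ ω, I ω = 0 ∨ I ω = 1) (hA01 : ∀ ω, A ω = 0 ∨ A ω = 1)
    (hAI : ∀ ω, A ω ≤ I ω)
    (hImeas : Measurable I) (hAmeas : Measurable A)
    (hindep : ProbabilityTheory.IndepFun V I μ)
    (hσ : ∫ ω, max (V ω - σ) 0 ∂μ = r) :
    (∫ ω, (A ω * V ω - I ω * r) ∂μ) ≤ ∫ ω, A ω * min σ (V ω) ∂μ ∧
    ((∫ ω, (A ω * V ω - I ω * r) ∂μ) = (∫ ω, A ω * min σ (V ω) ∂μ) ↔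
      μ {ω | I ω = 1 ∧ A ω = 0 ∧ σ < V ω} = 0) := by
  have hgap := integral_mul_min_sub_integral_eq hV hI01 hA01 hImeas hAmeas hindep hσ
  set g : Ω → ℝ := fun ω => (I ω - A ω) * max (V ω - σ) 0
  have hg_nonneg : 0 ≤ g := fun ω => mul_nonneg (sub_nonneg.2 (hAI ω)) (le_max_right _ _)
  have hg_int : Integrable g μ := by
    have hf := integrable_max_sub_const_zero hV σ
    simp only [g, sub_mul]
    exact (hf.mul_of_eq_zero_or_eq_one hImeas.aestronglyMeasurable hI01).sub
      (hf.mul_of_eq_zero_or_eq_one hAmeas.aestronglyMeasurable hA01)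
  have hsupport : {ω | ¬g ω = 0} = {ω | I ω = 1 ∧ A ω = 0 ∧ σ < V ω} := by
    ext ω
    exact sub_mul_max_sub_zero_ne_zero_iff (hI01 ω) (hA01 ω) (hAI ω)
  have hg_zero : ∫ ω, g ω ∂μ = 0 ↔ μ {ω | ¬g ω = 0} = 0 :=
    (integral_eq_zero_iff_of_nonneg hg_nonneg hg_int).trans ae_iff
  refine ⟨by linarith [integral_nonneg (μ := μ) hg_nonneg], ?_⟩
  rw [← hsupport, ← hg_zero]
  constructor <;> intro h <;> linarith

/-- Covered call lemma: if `V ≥ 0` is integrable, `σ` satisfies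
`E[(V − σ)⁺] = r ≥ 0`, `I, A` are {0,1}-valued with `A ≤ I` pointwise and `V`
is independent of `I`, then `E[A·V − I·r] ≤ E[A·min(σ, V)]`, with equality iff
the event `{I = 1, A = 0, V > σ}` has probability zero. -/
theorem covered_call_lemma
    {Ω : Type*} [MeasurableSpace Ω] (μ : Measure Ω) [IsProbabilityMeasure μ]
    (V I A : Ω → ℝ) (σ r : ℝ)
    (hV : Integrable V μ) (hVpos : ∀ᵐ ω ∂μ, 0 ≤ V ω)
    (hI01 : ∀ ω, I ω = 0 ∨ I ω = 1) (hA01 : ∀ ω, A ω = 0 ∨ A ω = 1)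
    (hAI : ∀ ω, A ω ≤ I ω)
    (hVmeas : Measurable V) (hImeas : Measurable I) (hAmeas : Measurable A)
    (hindep : ProbabilityTheory.IndepFun V I μ)
    (hr : 0 ≤ r) (hσ : ∫ ω, max (V ω - σ) 0 ∂μ = r) :
    (∫ ω, (A ω * V ω - I ω * r) ∂μ) ≤ ∫ ω, A ω * min σ (V ω) ∂μ ∧
    ((∫ ω, (A ω * V ω - I ω * r) ∂μ) = (∫ ω, A ω * min σ (V ω) ∂μ) ↔
      μ {ω | I ω = 1 ∧ A ω = 0 ∧ σ < V ω} = 0) :=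
  covered_call_lemma_general μ V I A σ r hV hI01 hA01 hAI hImeas hAmeas hindep hσ
end

section
/- The greedy matching on a finite weighted graph (repeatedly selecting the maximum-weight remaining edge with nonnegative weight and deleting its endpoints) achieves total weight at least half the weight of a maximum-weight matching. -/
/-!
Every edge `e` of a matching `M` is blocked by a greedy edge `f` of at least its weight that
meets it: either `e` itself was chosen, or it was rejected because of an earlier, hence heavier,
greedy edge. Since the edges of `M` are disjoint, a greedy edge with two vertices blocks at most
two edges of `M`, so charging each `w e` to a blocking edge gives the factor `2`.
-/

/-- Edges (finsets of vertices) are pairwise vertex-disjoint. -/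
def IsMatchingF {α : Type*} [DecidableEq α] (M : Finset (Finset α)) : Prop :=
  ∀ e ∈ M, ∀ f ∈ M, e ≠ f → e ∩ f = ∅

/-- Greedy matching: process edges in the given (decreasing-weight) order,
adding an edge whenever it is disjoint from all previously selected edges. -/
def greedyAux {α : Type*} [DecidableEq α] :
    List (Finset α) → List (Finset α) → List (Finset α)
  | acc, [] => acc
  | acc, e :: rest =>
    if ∀ f ∈ acc, e ∩ f = ∅ then greedyAux (e :: acc) rest
    else greedyAux acc rest

open Finset

theorem nodup_of_pairwise_disjoint_of_ne_bot {β : Type*} [PartialOrder β] [OrderBot β]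
    {l : List β} (hl : l.Pairwise Disjoint) (hbot : ∀ a ∈ l, a ≠ ⊥) : l.Nodup :=
  hl.imp_of_mem fun ha _ hab hEq => hbot _ ha (disjoint_self.1 (hEq ▸ hab : Disjoint _ _))

section Greedy

variable {α : Type*} [DecidableEq α]

lemma subset_greedyAux (acc rest : List (Finset α)) : acc ⊆ greedyAux acc rest := by
  induction rest generalizing acc with
  | nil => simp [greedyAux]
  | cons e r ih =>
    unfold greedyAux
    split
    · exact List.Subset.trans (List.subset_cons_self e acc) (ih _)
    · exact ih acc

lemma greedyAux_subset (acc rest : List (Finset α)) : greedyAux acc rest ⊆ acc ++ rest := by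
  induction rest generalizing acc with
  | nil => simp [greedyAux]
  | cons e r ih =>
    unfold greedyAux
    split
    · exact List.Subset.trans (ih _) List.perm_middle.symm.subset
    · exact List.Subset.trans (ih acc) (by grind)

lemma pairwise_disjoint_greedyAux (acc rest : List (Finset α)) (h : acc.Pairwise Disjoint) :
    (greedyAux acc rest).Pairwise Disjoint := by
  induction rest generalizing acc with
  | nil => simpa [greedyAux]
  | cons e r ih =>
    unfold greedyAux
    split
    · next hfree =>
      exact ih _ <| List.pairwise_cons.2
        ⟨fun f hf => disjoint_iff_inter_eq_empty.2 (hfree f hf), h⟩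
    · exact ih acc h

lemma exists_heavier_meeting_mem_greedyAux {β : Type*} [Preorder β] (w : Finset α → β)
    (acc rest : List (Finset α)) (hsort : rest.Pairwise (fun e f => w f ≤ w e))
    (hacc : ∀ f ∈ acc, ∀ e ∈ rest, w e ≤ w f) {e : Finset α} (he : e ∈ rest)
    (hne : e.Nonempty) : ∃ f ∈ greedyAux acc rest, (e ∩ f).Nonempty ∧ w e ≤ w f := by
  induction rest generalizing acc with
  | nil => simp at he
  | cons a r ih =>
    obtain ⟨ha, hr⟩ := List.pairwise_cons.1 hsort
    unfold greedyAux
    split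
    · rcases List.mem_cons.1 he with rfl | he
      · exact ⟨e, subset_greedyAux _ _ List.mem_cons_self, by simpa using hne, le_rfl⟩
      · refine ih (a :: acc) hr ?_ he
        rintro f (_ | ⟨_, hf⟩) e' he'
        · exact ha e' he'
        · exact hacc f hf e' (List.mem_cons_of_mem _ he')
    · next hblocked =>
      push Not at hblocked
      rcases List.mem_cons.1 he with rfl | he
      · obtain ⟨f, hf, hef⟩ := hblocked
        exact ⟨f, subset_greedyAux _ _ hf, hef, hacc f hf e List.mem_cons_self⟩
      · exact ih acc hr (fun f hf e' he' => hacc f hf e' (List.mem_cons_of_mem _ he')) he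

end Greedy

section Charging

variable {α : Type*} [DecidableEq α]

lemma card_filter_inter_nonempty_le {M : Finset (Finset α)} (hM : IsMatchingF M)
    (b : Finset α) : #{e ∈ M | (e ∩ b).Nonempty} ≤ #b := by
  refine card_le_card_of_forall_subsingleton (fun e v => v ∈ e) ?_ ?_
  · intro e he
    obtain ⟨v, hv⟩ := (mem_filter.1 he).2
    exact ⟨v, (mem_inter.1 hv).2, (mem_inter.1 hv).1⟩
  · rintro v - e₁ ⟨he₁, hv₁⟩ e₂ ⟨he₂, hv₂⟩
    by_contra hne
    have := hM e₁ (mem_filter.1 he₁).1 e₂ (mem_filter.1 he₂).1 hne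
    simpa [this] using mem_inter.2 ⟨hv₁, hv₂⟩

theorem sum_le_mul_sum_of_forall_exists_heavier_meeting {M G : Finset (Finset α)}
    (w : Finset α → ℝ) (k : ℕ) (hM : IsMatchingF M) (hG : ∀ f ∈ G, #f ≤ k)
    (hw : ∀ f ∈ G, 0 ≤ w f)
    (hblock : ∀ e ∈ M, ∃ f ∈ G, (e ∩ f).Nonempty ∧ w e ≤ w f) :
    ∑ e ∈ M, w e ≤ k * ∑ f ∈ G, w f := by
  calc ∑ e ∈ M, w e ≤ ∑ e ∈ M, ∑ f ∈ G with (e ∩ f).Nonempty, w f := by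
        refine sum_le_sum fun e he => ?_
        obtain ⟨f, hf, hef, hwf⟩ := hblock e he
        exact hwf.trans <|
          single_le_sum (fun g hg => hw g (mem_filter.1 hg).1) (mem_filter.2 ⟨hf, hef⟩)
    _ = ∑ f ∈ G, ∑ e ∈ M with (e ∩ f).Nonempty, w f :=
        sum_comm' fun e f => by simp only [mem_filter]; tauto
    _ = ∑ f ∈ G, (#{e ∈ M | (e ∩ f).Nonempty} : ℝ) * w f := by
        simp only [sum_const, nsmul_eq_mul]
    _ ≤ ∑ f ∈ G, (k : ℝ) * w f := by
        gcongr with f hf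
        · exact hw f hf
        · exact (card_filter_inter_nonempty_le hM f).trans (hG f hf)
    _ = k * ∑ f ∈ G, w f := (mul_sum _ _ _).symm

end Charging

theorem greedy_matching_half_approx_general {α : Type*} [DecidableEq α]
    (w : Finset α → ℝ) (L : List (Finset α))
    (hsort : L.Pairwise (fun e f => w f ≤ w e))
    (hcard : ∀ e ∈ L, e.card = 2)
    (hnonneg : ∀ e ∈ L, 0 ≤ w e)
    (M : Finset (Finset α)) (hML : ∀ e ∈ M, e ∈ L) (hM : IsMatchingF M) :
    ∑ e ∈ M, w e ≤ 2 * ((greedyAux [] L).map w).sum := by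
  set G := greedyAux [] L
  have hGL : G ⊆ L := by simpa using greedyAux_subset [] L
  have hnonempty : ∀ e ∈ L, e.Nonempty := fun e he => card_pos.1 (by simp [hcard e he])
  have hGnd : G.Nodup := nodup_of_pairwise_disjoint_of_ne_bot
    (pairwise_disjoint_greedyAux [] L .nil) fun f hf => (hnonempty f (hGL hf)).ne_empty
  rw [← List.sum_toFinset w hGnd]
  refine sum_le_mul_sum_of_forall_exists_heavier_meeting w 2 hM ?_ ?_ ?_
  · exact fun f hf => (hcard f (hGL (List.mem_toFinset.1 hf))).le
  · exact fun f hf => hnonneg f (hGL (List.mem_toFinset.1 hf))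
  · intro e he
    obtain ⟨f, hf, hef, hwf⟩ := exists_heavier_meeting_mem_greedyAux w [] L hsort (by simp)
      (hML e he) (hnonempty e (hML e he))
    exact ⟨f, List.mem_toFinset.2 hf, hef, hwf⟩

/-- The greedy matching on a finite weighted graph (edges of
cardinality 2, nonnegative weights, processed in decreasing weight order)
achieves at least half the weight of any (hence of a maximum-weight) matching. -/
theorem greedy_matching_half_approx {α : Type*} [DecidableEq α]
    (w : Finset α → ℝ) (L : List (Finset α)) (hnd : L.Nodup)
    (hsort : L.Pairwise (fun e f => w f ≤ w e))
    (hcard : ∀ e ∈ L, e.card = 2)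
    (hnonneg : ∀ e ∈ L, 0 ≤ w e)
    (M : Finset (Finset α)) (hML : ∀ e ∈ M, e ∈ L) (hM : IsMatchingF M) :
    ∑ e ∈ M, w e ≤ 2 * ((greedyAux [] L).map w).sum :=
  greedy_matching_half_approx_general w L hsort hcard hnonneg M hML hM
end

section
/- (Truthful profile is 4-ex post stable under the 1/4-rebate greedy matching) Let G be a finite bipartite graph with surpluses s_{ij} = v_{ij} − c_{ij} on edges. Run the greedy matching on edges with positive surplus (matching edges in decreasing order of surplus, discarding edges with s ≤ 0), and give each matched agent utility equal to 1/4 of the surplus of their matched edge (unmatched agents get 0). Then for every edge {i,j}, u_i + u_j ≥ s_{ij}/4. -/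
/-! An edge of positive surplus is either picked by greedy or, when it is processed, blocked by an
already picked edge sharing one of its endpoints. Since edges come in decreasing order of surplus,
that edge has at least the same surplus, so the shared endpoint earns at least `s e / 4`; the other
endpoint earns a nonnegative amount because only positive-surplus edges are ever picked. -/

/-- Greedy bipartite matching: process edges (bidder, asker pairs) in the given
(decreasing-surplus) order, adding an edge whenever neither endpoint is already
matched. -/
def greedyBip {β γ : Type*} [DecidableEq β] [DecidableEq γ] :
    List (β × γ) → List (β × γ) → List (β × γ)
  | acc, [] => acc
  | acc, e :: rest =>
    if ∀ f ∈ acc, e.1 ≠ f.1 ∧ e.2 ≠ f.2 then greedyBip (e :: acc) rest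
    else greedyBip acc rest

section Greedy

variable {β γ : Type*} [DecidableEq β] [DecidableEq γ]

lemma subset_greedyBip (acc L : List (β × γ)) : acc ⊆ greedyBip acc L := by
  induction L generalizing acc with
  | nil => exact List.Subset.refl _
  | cons e rest ih =>
    unfold greedyBip
    split_ifs
    · exact List.Subset.trans (List.subset_cons_self e acc) (ih _)
    · exact ih acc

lemma greedyBip_subset (acc L : List (β × γ)) : greedyBip acc L ⊆ acc ++ L := by
  induction L generalizing acc with
  | nil => simp [greedyBip]
  | cons e rest ih =>
    intro f hf
    unfold greedyBip at hf
    split_ifs at hf <;>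
    · have := ih _ hf
      simp only [List.mem_append, List.mem_cons] at this ⊢
      tauto

lemma greedyBip_dominates {α : Type*} [Preorder α] (s : β × γ → α) {L acc : List (β × γ)}
    (hsort : L.Pairwise (fun e f => s f ≤ s e)) (hacc : ∀ g ∈ acc, ∀ e ∈ L, s e ≤ s g)
    {e : β × γ} (he : e ∈ L) :
    ∃ f ∈ greedyBip acc L, (f.1 = e.1 ∨ f.2 = e.2) ∧ s e ≤ s f := by
  induction L generalizing acc with
  | nil => cases he
  | cons x rest ih =>
    rw [List.pairwise_cons] at hsort
    have hacc_rest : ∀ g ∈ acc, ∀ y ∈ rest, s y ≤ s g :=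
      fun g hg y hy => hacc g hg y (.tail _ hy)
    unfold greedyBip
    split_ifs with hfree
    · rcases List.mem_cons.1 he with rfl | he
      · exact ⟨e, subset_greedyBip _ _ (.head _), Or.inl rfl, le_rfl⟩
      · refine ih hsort.2 (fun g hg y hy => ?_) he
        rcases List.mem_cons.1 hg with rfl | hg
        exacts [hsort.1 y hy, hacc_rest g hg y hy]
    · rcases List.mem_cons.1 he with rfl | he
      · push Not at hfree
        obtain ⟨g, hg, hshare⟩ := hfree
        exact ⟨g, subset_greedyBip _ _ hg,
          or_iff_not_imp_left.2 fun h => (hshare (Ne.symm h)).symm, hacc g hg e (.head _)⟩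
      · exact ih hsort.2 hacc_rest he

end Greedy

lemma utility_nonneg {ι δ α : Type*} [Preorder α] [Zero α] {M : List ι} {p : ι → δ}
    {w : ι → α} {u : δ → α} (hw : ∀ e ∈ M, 0 ≤ w e) (hu : ∀ e ∈ M, u (p e) = w e)
    (hu0 : ∀ i, (∀ e ∈ M, p e ≠ i) → u i = 0) (i : δ) : 0 ≤ u i := by
  by_cases h : ∃ e ∈ M, p e = i
  · obtain ⟨e, he, rfl⟩ := h
    exact (hu e he).symm ▸ hw e he
  · push Not at h
    exact (hu0 i h).symm ▸ le_rfl

theorem truthful_four_ex_post_stable_general {β γ : Type*} [DecidableEq β] [DecidableEq γ]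
    (E : Finset (β × γ)) (s : β × γ → ℝ)
    (L : List (β × γ))
    (hsort : L.Pairwise (fun e f => s f ≤ s e))
    (hL : ∀ e, e ∈ L ↔ e ∈ E ∧ 0 < s e)
    (uB : β → ℝ) (uA : γ → ℝ)
    (huB : ∀ e ∈ greedyBip [] L, uB e.1 = s e / 4)
    (huA : ∀ e ∈ greedyBip [] L, uA e.2 = s e / 4)
    (huB0 : ∀ i, (∀ e ∈ greedyBip [] L, e.1 ≠ i) → uB i = 0)
    (huA0 : ∀ j, (∀ e ∈ greedyBip [] L, e.2 ≠ j) → uA j = 0) :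
    ∀ e ∈ E, s e / 4 ≤ uB e.1 + uA e.2 := by
  have hpos : ∀ f ∈ greedyBip [] L, 0 ≤ s f / 4 := fun f hf => by
    have := ((hL f).1 (by simpa using greedyBip_subset [] L hf)).2
    positivity
  have hB := utility_nonneg hpos huB huB0
  have hA := utility_nonneg hpos huA huA0
  intro e he
  by_cases hse : 0 < s e
  · obtain ⟨f, hf, hshare | hshare, hle⟩ :=
      greedyBip_dominates s (acc := []) hsort (by simp) ((hL e).2 ⟨he, hse⟩)
    · have := huB f hf
      rw [hshare] at this
      linarith [hA e.2]
    · have := huA f hf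
      rw [hshare] at this
      linarith [hB e.1]
  · linarith [hB e.1, hA e.2]

/-- Truthful profile is 4-ex post stable under the 1/4-rebate
greedy matching: run greedy on the positive-surplus edges in decreasing order
of surplus; each matched agent gets utility one quarter of its edge's surplus,
unmatched agents get 0. Then `u_i + u_j ≥ s_{ij}/4` for every edge `{i,j}`. -/
theorem truthful_four_ex_post_stable {β γ : Type*} [DecidableEq β] [DecidableEq γ]
    (E : Finset (β × γ)) (s : β × γ → ℝ)
    (L : List (β × γ)) (hnd : L.Nodup)
    (hsort : L.Pairwise (fun e f => s f ≤ s e))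
    (hL : ∀ e, e ∈ L ↔ e ∈ E ∧ 0 < s e)
    (uB : β → ℝ) (uA : γ → ℝ)
    (huB : ∀ e ∈ greedyBip [] L, uB e.1 = s e / 4)
    (huA : ∀ e ∈ greedyBip [] L, uA e.2 = s e / 4)
    (huB0 : ∀ i, (∀ e ∈ greedyBip [] L, e.1 ≠ i) → uB i = 0)
    (huA0 : ∀ j, (∀ e ∈ greedyBip [] L, e.2 ≠ j) → uA j = 0) :
    ∀ e ∈ E, s e / 4 ≤ uB e.1 + uA e.2 :=
  truthful_four_ex_post_stable_general E s L hsort hL uB uA huB huA huB0 huA0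
end

section
/- (Upper bound on optimal welfare via covered calls) Let M* be a maximum-weight matching on a finite graph with edge weights κ_{ij} + κ_{ji} ≥ 0. For any matching process with indicators A_{ij} = A_{ji} (matched) and I_{ij} (inspected), if E[A_{ij} v_{ij} − I_{ij} r_{ij}] ≤ E[A_{ij} κ_{ij}] for all ordered pairs, then the expected welfare E[∑_{edges} (A_{ij} v_{ij} − I_{ij} r_{ij}) + (A_{ji} v_{ji} − I_{ji} r_{ji})] is at most E[∑_{{i,j}∈M*}(κ_{ij} + κ_{ji})]. -/
open MeasureTheory

/-- A symmetric set `M` of directed pairs forms a matching: it is symmetric and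
each agent appears with at most one partner. -/
def IsSymMatching {ι : Type*} (M : Finset (ι × ι)) : Prop :=
  (∀ e ∈ M, (e.2, e.1) ∈ M) ∧
  (∀ e ∈ M, ∀ f ∈ M, e.1 = f.1 → e.2 = f.2)

/-- Upper bound on optimal welfare via covered calls: let `D` be
the (symmetric) directed edge set of a finite graph; `A` the (symmetric,
pointwise-matching) matched indicators, `I` the inspected indicators; suppose
`E[A_{ij} v_{ij} − I_{ij} r_{ij}] ≤ E[A_{ij} κ_{ij}]` for every directed pair,
`κ ≥ 0`, and `M*(ω)` is a maximum-weight matching under the covered-call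
weights. Then the expected welfare is at most `E[∑_{M*} κ]`. -/
theorem opt_welfare_covered_call_bound
    {Ω ι : Type*} [MeasurableSpace Ω] (μ : Measure Ω) [IsProbabilityMeasure μ]
    [Fintype ι] [DecidableEq ι]
    (D : Finset (ι × ι)) (hDsymm : ∀ e ∈ D, (e.2, e.1) ∈ D)
    (A I : ι → ι → Ω → ℝ) (v κ : ι → ι → Ω → ℝ) (r : ι → ι → ℝ)
    (hA01 : ∀ i j ω, A i j ω = 0 ∨ A i j ω = 1)
    (hI01 : ∀ i j ω, I i j ω = 0 ∨ I i j ω = 1)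
    (hAsymm : ∀ i j ω, A i j ω = A j i ω)
    (hκpos : ∀ i j ω, 0 ≤ κ i j ω)
    (hr : ∀ i j, 0 ≤ r i j)
    (hAmatch : ∀ ω, IsSymMatching (D.filter (fun e => A e.1 e.2 ω = 1)))
    (Mstar : Ω → Finset (ι × ι))
    (hMsub : ∀ ω, Mstar ω ⊆ D)
    (hMmatch : ∀ ω, IsSymMatching (Mstar ω))
    (hMmax : ∀ ω, ∀ M ⊆ D, IsSymMatching M →
      ∑ e ∈ M, κ e.1 e.2 ω ≤ ∑ e ∈ Mstar ω, κ e.1 e.2 ω)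
    (hpair : ∀ e ∈ D,
      (∫ ω, (A e.1 e.2 ω * v e.1 e.2 ω - I e.1 e.2 ω * r e.1 e.2) ∂μ) ≤
        ∫ ω, A e.1 e.2 ω * κ e.1 e.2 ω ∂μ)
    (hint1 : ∀ e ∈ D,
      Integrable (fun ω => A e.1 e.2 ω * v e.1 e.2 ω - I e.1 e.2 ω * r e.1 e.2) μ)
    (hint2 : ∀ e ∈ D, Integrable (fun ω => A e.1 e.2 ω * κ e.1 e.2 ω) μ)
    (hint3 : Integrable (fun ω => ∑ e ∈ Mstar ω, κ e.1 e.2 ω) μ) :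
    (∫ ω, ∑ e ∈ D, (A e.1 e.2 ω * v e.1 e.2 ω - I e.1 e.2 ω * r e.1 e.2) ∂μ) ≤
      ∫ ω, ∑ e ∈ Mstar ω, κ e.1 e.2 ω ∂μ := by
  have h1 : (∫ ω, ∑ e ∈ D, (A e.1 e.2 ω * v e.1 e.2 ω - I e.1 e.2 ω * r e.1 e.2) ∂μ)
      ≤ ∫ ω, ∑ e ∈ D, A e.1 e.2 ω * κ e.1 e.2 ω ∂μ := by
    rw [integral_finset_sum D hint1, integral_finset_sum D hint2]
    exact Finset.sum_le_sum hpair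
  refine h1.trans (integral_mono (integrable_finset_sum D hint2) hint3 ?_)
  intro ω
  have key : ∑ e ∈ D, A e.1 e.2 ω * κ e.1 e.2 ω
      = ∑ e ∈ D.filter (fun e => A e.1 e.2 ω = 1), κ e.1 e.2 ω := by
    rw [Finset.sum_filter]
    refine Finset.sum_congr rfl fun e _ => ?_
    rcases hA01 e.1 e.2 ω with h | h <;> simp [h]
  calc ∑ e ∈ D, A e.1 e.2 ω * κ e.1 e.2 ω
      = ∑ e ∈ D.filter (fun e => A e.1 e.2 ω = 1), κ e.1 e.2 ω := key
    _ ≤ ∑ e ∈ Mstar ω, κ e.1 e.2 ω :=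
        hMmax ω _ (Finset.filter_subset _ _) (hAmatch ω)
end
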